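/- arXiv:1912.06951 — 2 statements merged into one kernel-verified Lean document; each statement's English description precedes it below -/
import Mathlib

section
/- Let K be a field of characteristic zero and let Λ₁, Λ₂, Λ₃ ∈ K with Λ₂ ≠ Λ₃, Λ₁ ≠ Λ₂, Λ₁ ≠ Λ₃, Λ₁ ≠ 2, and Λ₁ ≠ −2. Define Λ′₁ = 2(2Λ₁ − Λ₂ − Λ₃)/(Λ₂ − Λ₃), Λ′₂ = Λ′₁ − 4(Λ₁−Λ₂)(Λ₁−Λ₃)/((Λ₁+2)(Λ₂−Λ₃)), Λ′₃ = Λ′₁ − 4(Λ₁−Λ₂)(Λ₁−Λ₃)/((Λ₁−2)(Λ₂−Λ₃)), and for a triple (a,b,c) with b ≠ c and a ≠ ±2 set ν(a,b,c) = 16(a−c)(a−b)/((b−c)²(a²−4)). Then ν(Λ′₁,Λ′₂,Λ′₃) · ν(Λ₁,Λ₂,Λ₃) = 1. -/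
/-!
Write `d = Λ₂ - Λ₃`, `w = Λ₁² - 4` and `ν = ν(Λ₁,Λ₂,Λ₃)`. The isogenous moduli satisfy
`Λ′₂ - Λ′₃ = d ν`, `Λ′₁² - 4 = w ν` and `16 (Λ′₁ - Λ′₃)(Λ′₁ - Λ′₂) = d² w ν²`, so
`ν(Λ′₁,Λ′₂,Λ′₃) = d² w ν² / ((d ν)² (w ν)) = ν⁻¹`.
-/

section TwistFactor

variable {K : Type*} [Field K]

def twistFactor (a b c : K) : K :=
  16 * (a - c) * (a - b) / ((b - c) ^ 2 * (a ^ 2 - 4))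

theorem sq_sub_four_ne_zero {a : K} (hp2 : a ≠ 2) (hm2 : a ≠ -2) : a ^ 2 - 4 ≠ 0 := by
  rw [show a ^ 2 - 4 = (a - 2) * (a + 2) by ring]
  exact mul_ne_zero (sub_ne_zero.mpr hp2) (by rwa [← sub_neg_eq_add, sub_ne_zero])

theorem twistFactor_ne_zero [NeZero (2 : K)] {a b c : K} (hbc : b ≠ c) (hab : a ≠ b)
    (hac : a ≠ c) (hp2 : a ≠ 2) (hm2 : a ≠ -2) : twistFactor a b c ≠ 0 := by
  have h16 : (16 : K) ≠ 0 := by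
    simpa [show (16 : K) = 2 ^ 4 by norm_num] using NeZero.ne (2 : K)
  exact div_ne_zero (by simp [h16, sub_ne_zero.mpr hab, sub_ne_zero.mpr hac])
    (mul_ne_zero (pow_ne_zero 2 (sub_ne_zero.mpr hbc)) (sq_sub_four_ne_zero hp2 hm2))

theorem mul_sq_div_mul_cube {x : K} (hx : x ≠ 0) (t : K) : x * t ^ 2 / (x * t ^ 3) = t⁻¹ := by
  rw [mul_div_mul_left _ _ hx]
  rcases eq_or_ne t 0 with rfl | ht
  · simp
  · field_simp

section Richelot

variable (Λ₁ Λ₂ Λ₃ : K)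

/-- `richelotᵢ Λ₁ Λ₂ Λ₃` is the modulus `Λ′ᵢ` of the (2,2)-isogenous curve. -/
def richelot₁ : K := 2 * (2 * Λ₁ - Λ₂ - Λ₃) / (Λ₂ - Λ₃)

def richelot₂ : K :=
  richelot₁ Λ₁ Λ₂ Λ₃ - 4 * (Λ₁ - Λ₂) * (Λ₁ - Λ₃) / ((Λ₁ + 2) * (Λ₂ - Λ₃))

def richelot₃ : K :=
  richelot₁ Λ₁ Λ₂ Λ₃ - 4 * (Λ₁ - Λ₂) * (Λ₁ - Λ₃) / ((Λ₁ - 2) * (Λ₂ - Λ₃))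

variable {Λ₁ Λ₂ Λ₃}

theorem richelot₂_sub_richelot₃ (h₂₃ : Λ₂ ≠ Λ₃) (hp2 : Λ₁ ≠ 2) (hm2 : Λ₁ ≠ -2) :
    richelot₂ Λ₁ Λ₂ Λ₃ - richelot₃ Λ₁ Λ₂ Λ₃ = (Λ₂ - Λ₃) * twistFactor Λ₁ Λ₂ Λ₃ := by
  have hp : Λ₁ - 2 ≠ 0 := sub_ne_zero.mpr hp2
  have hm : Λ₁ + 2 ≠ 0 := by rwa [← sub_neg_eq_add, sub_ne_zero]
  have hd : Λ₂ - Λ₃ ≠ 0 := sub_ne_zero.mpr h₂₃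
  simp only [richelot₂, richelot₃, twistFactor, show Λ₁ ^ 2 - 4 = (Λ₁ - 2) * (Λ₁ + 2) by ring]
  field_simp
  ring

theorem richelot₁_sq_sub_four (h₂₃ : Λ₂ ≠ Λ₃) (hp2 : Λ₁ ≠ 2) (hm2 : Λ₁ ≠ -2) :
    richelot₁ Λ₁ Λ₂ Λ₃ ^ 2 - 4 = (Λ₁ ^ 2 - 4) * twistFactor Λ₁ Λ₂ Λ₃ := by
  have hp : Λ₁ - 2 ≠ 0 := sub_ne_zero.mpr hp2
  have hm : Λ₁ + 2 ≠ 0 := by rwa [← sub_neg_eq_add, sub_ne_zero]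
  have hd : Λ₂ - Λ₃ ≠ 0 := sub_ne_zero.mpr h₂₃
  simp only [richelot₁, twistFactor, show Λ₁ ^ 2 - 4 = (Λ₁ - 2) * (Λ₁ + 2) by ring]
  field_simp
  ring

theorem richelot₁_sub_mul_richelot₁_sub (h₂₃ : Λ₂ ≠ Λ₃) (hp2 : Λ₁ ≠ 2) (hm2 : Λ₁ ≠ -2) :
    16 * (richelot₁ Λ₁ Λ₂ Λ₃ - richelot₃ Λ₁ Λ₂ Λ₃) * (richelot₁ Λ₁ Λ₂ Λ₃ - richelot₂ Λ₁ Λ₂ Λ₃) =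
      (Λ₂ - Λ₃) ^ 2 * (Λ₁ ^ 2 - 4) * twistFactor Λ₁ Λ₂ Λ₃ ^ 2 := by
  have hp : Λ₁ - 2 ≠ 0 := sub_ne_zero.mpr hp2
  have hm : Λ₁ + 2 ≠ 0 := by rwa [← sub_neg_eq_add, sub_ne_zero]
  have hd : Λ₂ - Λ₃ ≠ 0 := sub_ne_zero.mpr h₂₃
  simp only [richelot₂, richelot₃, twistFactor, show Λ₁ ^ 2 - 4 = (Λ₁ - 2) * (Λ₁ + 2) by ring]
  field_simp
  ring

theorem twistFactor_richelot (h₂₃ : Λ₂ ≠ Λ₃) (hp2 : Λ₁ ≠ 2) (hm2 : Λ₁ ≠ -2) :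
    twistFactor (richelot₁ Λ₁ Λ₂ Λ₃) (richelot₂ Λ₁ Λ₂ Λ₃) (richelot₃ Λ₁ Λ₂ Λ₃) =
      (twistFactor Λ₁ Λ₂ Λ₃)⁻¹ := by
  have hdw : (Λ₂ - Λ₃) ^ 2 * (Λ₁ ^ 2 - 4) ≠ 0 :=
    mul_ne_zero (pow_ne_zero 2 (sub_ne_zero.mpr h₂₃)) (sq_sub_four_ne_zero hp2 hm2)
  rw [twistFactor, richelot₁_sub_mul_richelot₁_sub h₂₃ hp2 hm2, richelot₂_sub_richelot₃ h₂₃ hp2 hm2,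
    richelot₁_sq_sub_four h₂₃ hp2 hm2, ← mul_sq_div_mul_cube hdw]
  ring

end Richelot

end TwistFactor

/-- Under the (2,2)-isogeny transformation of moduli, the twist factor ν
is mapped to its reciprocal: ν(Λ′₁,Λ′₂,Λ′₃) · ν(Λ₁,Λ₂,Λ₃) = 1. -/
theorem richelot_twist_factor_reciprocal (K : Type*) [Field K] [CharZero K]
    (Λ₁ Λ₂ Λ₃ : K) (h₂₃ : Λ₂ ≠ Λ₃) (h₁₂ : Λ₁ ≠ Λ₂) (h₁₃ : Λ₁ ≠ Λ₃)
    (hp2 : Λ₁ ≠ 2) (hm2 : Λ₁ ≠ -2) (Λ'₁ Λ'₂ Λ'₃ : K)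
    (h'₁ : Λ'₁ = 2 * (2 * Λ₁ - Λ₂ - Λ₃) / (Λ₂ - Λ₃))
    (h'₂ : Λ'₂ = Λ'₁ - 4 * (Λ₁ - Λ₂) * (Λ₁ - Λ₃) / ((Λ₁ + 2) * (Λ₂ - Λ₃)))
    (h'₃ : Λ'₃ = Λ'₁ - 4 * (Λ₁ - Λ₂) * (Λ₁ - Λ₃) / ((Λ₁ - 2) * (Λ₂ - Λ₃)))
    (ν : K → K → K → K)
    (hν : ∀ a b c : K, ν a b c = 16 * (a - c) * (a - b) / ((b - c) ^ 2 * (a ^ 2 - 4))) :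
    ν Λ'₁ Λ'₂ Λ'₃ * ν Λ₁ Λ₂ Λ₃ = 1 := by
  obtain rfl : ν = twistFactor := funext₃ hν
  obtain rfl : Λ'₁ = richelot₁ Λ₁ Λ₂ Λ₃ := h'₁
  obtain rfl : Λ'₂ = richelot₂ Λ₁ Λ₂ Λ₃ := h'₂
  obtain rfl : Λ'₃ = richelot₃ Λ₁ Λ₂ Λ₃ := h'₃
  rw [twistFactor_richelot h₂₃ hp2 hm2]
  exact inv_mul_cancel₀ (twistFactor_ne_zero h₂₃ h₁₂ h₁₃ hp2 hm2)
end

section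
/- Let p be an odd prime, let a, b, c ∈ ZMod p, and let ℓ₁ be an integer with 0 ≤ ℓ₁ < (p−1)/2. Then, as elements of ZMod p, Σ_{w ∈ ZMod p} w^{ℓ₁}·((w−a)(w−b)(w−c))^{(p−1)/2} = − (−1)^{(p−1)/2 − ℓ₁} · Σ_{i+j+k = ℓ₁ + (p−1)/2, 0 ≤ i,j,k ≤ (p−1)/2} C((p−1)/2, i)·C((p−1)/2, j)·C((p−1)/2, k)·aⁱ·bʲ·cᵏ, where C(n, k) denotes the binomial coefficient. -/
/-!
Expanding `w ^ ℓ * ((w - a) * (w - b) * (w - c)) ^ m` by the binomial theorem turns the sum into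
a combination of power sums `∑ w, w ^ e` with `e < 2 * (q - 1)`. Over a field with `q` elements
such a power sum is `-1` for `e = q - 1` and `0` otherwise, so exactly the terms with
`i + j + k = ℓ + m` survive, each with sign `(-1) ^ (i + j + k) = (-1) ^ (m - ℓ)`.
-/

open Finset

lemma sub_pow_eq_sum_neg_one_pow_choose {R : Type*} [CommRing R] (w a : R) (m : ℕ) :
    (w - a) ^ m = ∑ i ∈ range (m + 1), (-1) ^ i * (m.choose i * a ^ i) * w ^ (m - i) := by
  rw [sub_eq_neg_add, add_pow]
  refine sum_congr rfl fun i _ => ?_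
  rw [neg_pow]
  ring

lemma pow_mul_prod_sub_pow_eq_sum {R : Type*} [CommRing R] (w a b c : R) (ℓ m : ℕ) :
    w ^ ℓ * ((w - a) * (w - b) * (w - c)) ^ m =
      ∑ i ∈ range (m + 1), ∑ j ∈ range (m + 1), ∑ k ∈ range (m + 1),
        (-1) ^ (i + j + k) * (m.choose i * m.choose j * m.choose k * a ^ i * b ^ j * c ^ k) *
          w ^ (ℓ + (m - i) + (m - j) + (m - k)) := by
  rw [mul_pow, mul_pow, sub_pow_eq_sum_neg_one_pow_choose w a,
    sub_pow_eq_sum_neg_one_pow_choose w b, sub_pow_eq_sum_neg_one_pow_choose w c, sum_mul_sum,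
    sum_mul, mul_sum]
  refine sum_congr rfl fun i _ => ?_
  rw [sum_mul, mul_sum]
  refine sum_congr rfl fun j _ => ?_
  rw [mul_sum, mul_sum]
  refine sum_congr rfl fun k _ => ?_
  ring

namespace FiniteField

variable {K : Type*} [Field K] [Fintype K]

theorem sum_pow_eq_sum_units_pow [DecidableEq K] {e : ℕ} (he : e ≠ 0) :
    ∑ x : K, x ^ e = ∑ x : Kˣ, (x : K) ^ e := by
  rw [← sum_filter_of_ne (p := (· ≠ 0)) fun x _ hx h0 => hx (by rw [h0, zero_pow he]),
    ← sum_subtype_eq_sum_filter, subtype_univ, ← (unitsEquivNeZero (G₀ := K)).sum_comp]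
  rfl

theorem sum_pow_of_lt_two_mul {e : ℕ} (he : e < 2 * (Fintype.card K - 1)) :
    ∑ x : K, x ^ e = if e = Fintype.card K - 1 then -1 else 0 := by
  classical
  have hq : 1 < Fintype.card K := Fintype.one_lt_card
  rcases Nat.eq_zero_or_pos e with rfl | he0
  · rw [sum_pow_lt_card_sub_one K 0 (by omega), if_neg (by omega)]
  rw [sum_pow_eq_sum_units_pow he0.ne', sum_pow_units]
  refine if_congr ⟨fun ⟨d, hd⟩ => ?_, fun h => h ▸ dvd_rfl⟩ rfl rfl
  have : d < 2 := Nat.lt_of_mul_lt_mul_left (a := Fintype.card K - 1) (by omega)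
  interval_cases d <;> omega

theorem sum_pow_mul_prod_sub_pow_eq {m ℓ : ℕ} (hq : Fintype.card K = 2 * m + 1) (hℓ : ℓ < m)
    (a b c : K) :
    ∑ w : K, w ^ ℓ * ((w - a) * (w - b) * (w - c)) ^ m =
      -((-1) ^ (m - ℓ) *
        ∑ i ∈ range (m + 1), ∑ j ∈ range (m + 1), ∑ k ∈ range (m + 1),
          if i + j + k = ℓ + m then
            (m.choose i : K) * m.choose j * m.choose k * a ^ i * b ^ j * c ^ k
          else 0) := by
  simp_rw [pow_mul_prod_sub_pow_eq_sum, mul_sum, ← sum_neg_distrib]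
  rw [sum_comm]
  refine sum_congr rfl fun i hi => ?_
  rw [sum_comm]
  refine sum_congr rfl fun j hj => ?_
  rw [sum_comm]
  refine sum_congr rfl fun k hk => ?_
  rw [mem_range] at hi hj hk
  rw [← mul_sum, sum_pow_of_lt_two_mul (by omega), hq]
  by_cases h : i + j + k = ℓ + m
  · have hsign : (-1 : K) ^ (i + j + k) = (-1) ^ (m - ℓ) := by
      rw [h, show ℓ + m = m - ℓ + 2 * ℓ by omega, pow_add, pow_mul, neg_one_sq, one_pow, mul_one]
    rw [if_pos (by omega), if_pos h, hsign]
    ring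
  · rw [if_neg (by omega), if_neg h]
    ring

end FiniteField

/-- Evaluation of the base character sum in the point-count of the
twisted Legendre pencil. -/
theorem base_character_sum (p : ℕ) [Fact p.Prime] (hp : Odd p) (a b c : ZMod p)
    (ℓ₁ : ℕ) (hℓ₁ : ℓ₁ < (p - 1) / 2) :
    ∑ w : ZMod p, w ^ ℓ₁ * ((w - a) * (w - b) * (w - c)) ^ ((p - 1) / 2) =
      -((-1 : ZMod p) ^ ((p - 1) / 2 - ℓ₁) *
        ∑ i ∈ Finset.range ((p - 1) / 2 + 1), ∑ j ∈ Finset.range ((p - 1) / 2 + 1),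
          ∑ k ∈ Finset.range ((p - 1) / 2 + 1),
            if i + j + k = ℓ₁ + (p - 1) / 2 then
              (((p - 1) / 2).choose i : ZMod p) * (((p - 1) / 2).choose j : ZMod p) *
              (((p - 1) / 2).choose k : ZMod p) * a ^ i * b ^ j * c ^ k
            else 0) := by
  have hcard : Fintype.card (ZMod p) = 2 * ((p - 1) / 2) + 1 := by
    obtain ⟨t, rfl⟩ := hp
    rw [ZMod.card]
    omega
  exact FiniteField.sum_pow_mul_prod_sub_pow_eq hcard hℓ₁ a b c
end
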